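/- In the Poincaré ball model (𝔹^{n+1}, ḡ = 4/(1−|x|²)² δ) of hyperbolic space, for each constant vector a ∈ ℝ^{n+1} and radius parameter R_ℝ ∈ (0,1), the vector field X_a = (2/(1−R_ℝ²))(⟨x,a⟩x − ½(|x|²+R_ℝ²)a) is conformal Killing with conformal factor V_a = 2⟨x,a⟩/(1−|x|²): ½(∇̄_i (X_a)_j + ∇̄_j (X_a)_i) = V_a ḡ_{ij}. -/

import Mathlib

/-! The field `X_a` is already conformal Killing for the Euclidean metric, with factor
`2⟨x,a⟩/(1−R²)`: its derivative is `Z ↦ (2/(1−R²))(⟨x,a⟩Z + ⟨Z,a⟩x − ⟨x,Z⟩a)`, whose last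
two terms form a skew endomorphism. For `ḡ = e^{2u}δ` the symmetrised `ḡ(∇̄_Z X, W)` equals
`e^{2u}` times the symmetrised `⟨D_Z X, W⟩` plus `2 du(X) ḡ(Z,W)`, and
`du(X_a) = (2/(1−R²))⟨x,a⟩(|x|²−R²)/(1−|x|²)`; the two factors add up to `V_a`. -/

noncomputable section PoincareBall

variable {m : ℕ}

/-- The Euclidean gradient of the conformal factor exponent `u = log(2/(1−|y|²))` of
the Poincaré ball metric `ḡ = e^{2u} δ`, namely `∇u = 2y/(1−|y|²)`. -/
def pbGradU (y : EuclideanSpace ℝ (Fin m)) : EuclideanSpace ℝ (Fin m) :=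
  (2 / (1 - ‖y‖ ^ 2)) • y

/-- The hyperbolic (Poincaré ball) metric `ḡ = 4/(1−|y|²)² δ` evaluated on two vectors. -/
def pbMetric (y v w : EuclideanSpace ℝ (Fin m)) : ℝ :=
  (4 / (1 - ‖y‖ ^ 2) ^ 2) * (inner ℝ v w : ℝ)

/-- The Levi-Civita covariant derivative `∇̄_Z W` of the Poincaré ball metric
`ḡ = e^{2u} δ`, given by the standard conformal change formula
`∇̄_Z W = D_Z W + du(Z) W + du(W) Z − ⟨Z,W⟩ ∇u`. -/
def pbConn (W : EuclideanSpace ℝ (Fin m) → EuclideanSpace ℝ (Fin m))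
    (y Z : EuclideanSpace ℝ (Fin m)) : EuclideanSpace ℝ (Fin m) :=
  fderiv ℝ W y Z + (inner ℝ (pbGradU y) Z : ℝ) • W y + (inner ℝ (pbGradU y) (W y) : ℝ) • Z
    - (inner ℝ Z (W y) : ℝ) • pbGradU y

/-- The hyperbolic Hessian `∇̄²V(Z,W) = Z(W(V)) − dV(∇̄_Z W)` for constant directions
`Z, W`. -/
def pbHess (V : EuclideanSpace ℝ (Fin m) → ℝ) (y Z W : EuclideanSpace ℝ (Fin m)) : ℝ :=
  fderiv ℝ (fun z => fderiv ℝ V z W) y Z - fderiv ℝ V y (pbConn (fun _ => W) y Z)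

/-- The function `V_a = 2⟨x,a⟩/(1−|x|²)` on the Poincaré ball. -/
def pbVa (a y : EuclideanSpace ℝ (Fin m)) : ℝ :=
  2 * (inner ℝ y a : ℝ) / (1 - ‖y‖ ^ 2)

end PoincareBall

open scoped RealInnerProductSpace

section InnerProductSpace

variable {E : Type*} [NormedAddCommGroup E] [InnerProductSpace ℝ E]

noncomputable def pbXa (R : ℝ) (a z : E) : E :=
  (2 / (1 - R ^ 2)) • (⟪z, a⟫ • z - ((‖z‖ ^ 2 + R ^ 2) / 2) • a)

theorem fderiv_pbXa_apply (R : ℝ) (a y Z : E) :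
    fderiv ℝ (pbXa R a) y Z = (2 / (1 - R ^ 2)) • (⟪Z, a⟫ • y + ⟪y, a⟫ • Z - ⟪y, Z⟫ • a) := by
  have hinner : HasFDerivAt (⟪·, a⟫) (innerSL ℝ a) y := by
    simpa [real_inner_comm] using (innerSL ℝ a).hasFDerivAt (x := y)
  have hnorm := ((hasStrictFDerivAt_norm_sq y).hasFDerivAt.add_const (R ^ 2)).mul_const 2⁻¹
  have hX := ((hinner.smul (hasFDerivAt_id y)).sub (hnorm.smul_const a)).const_smul
    (2 / (1 - R ^ 2))
  rw [show fderiv ℝ (pbXa R a) y = _ from hX.fderiv]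
  simp only [smul_apply, sub_apply,
    add_apply, ContinuousLinearMap.id_apply,
    ContinuousLinearMap.smulRight_apply, coe_innerSL_apply, id_eq, nsmul_eq_mul, real_inner_comm]
  module

theorem inner_fderiv_pbXa_add_swap (R : ℝ) (a y Z W : E) :
    ⟪fderiv ℝ (pbXa R a) y Z, W⟫ + ⟪fderiv ℝ (pbXa R a) y W, Z⟫ =
      2 * (2 / (1 - R ^ 2) * ⟪y, a⟫) * ⟪Z, W⟫ := by
  simp only [fderiv_pbXa_apply, real_inner_smul_left, inner_add_left, inner_sub_left]
  rw [real_inner_comm W a, real_inner_comm Z a, real_inner_comm Z W]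
  ring

end InnerProductSpace

section PoincareBall

variable {m : ℕ}

theorem pbMetric_pbConn_add_swap (X : EuclideanSpace ℝ (Fin m) → EuclideanSpace ℝ (Fin m))
    (y Z W : EuclideanSpace ℝ (Fin m)) :
    pbMetric y (pbConn X y Z) W + pbMetric y (pbConn X y W) Z =
      4 / (1 - ‖y‖ ^ 2) ^ 2 * (⟪fderiv ℝ X y Z, W⟫ + ⟪fderiv ℝ X y W, Z⟫)
        + 2 * ⟪pbGradU y, X y⟫ * pbMetric y Z W := by
  simp only [pbMetric, pbConn, inner_add_left, inner_sub_left, real_inner_smul_left]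
  rw [real_inner_comm W Z, real_inner_comm W (X y), real_inner_comm W (pbGradU y),
    real_inner_comm Z (X y)]
  ring

theorem inner_pbGradU_pbXa (R : ℝ) (a y : EuclideanSpace ℝ (Fin m)) :
    ⟪pbGradU y, pbXa R a y⟫ = 2 / (1 - R ^ 2) * ⟪y, a⟫ * ((‖y‖ ^ 2 - R ^ 2) / (1 - ‖y‖ ^ 2)) := by
  simp only [pbGradU, pbXa, real_inner_smul_left, real_inner_smul_right, inner_sub_right,
    real_inner_self_eq_norm_sq]
  ring

theorem pbXa_conformalKilling {R : ℝ} (hR : R ^ 2 ≠ 1) (a : EuclideanSpace ℝ (Fin m))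
    {y : EuclideanSpace ℝ (Fin m)} (hy : ‖y‖ < 1) (Z W : EuclideanSpace ℝ (Fin m)) :
    (1 / 2 : ℝ) * (pbMetric y (pbConn (pbXa R a) y Z) W + pbMetric y (pbConn (pbXa R a) y W) Z)
      = pbVa a y * pbMetric y Z W := by
  have hy' : 1 - ‖y‖ ^ 2 ≠ 0 := by nlinarith [norm_nonneg y]
  have hR' : 1 - R ^ 2 ≠ 0 := sub_ne_zero.mpr (Ne.symm hR)
  rw [pbMetric_pbConn_add_swap, inner_fderiv_pbXa_add_swap, inner_pbGradU_pbXa]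
  simp only [pbMetric, pbVa]
  field_simp
  ring

end PoincareBall

/-- in the Poincaré ball model, for `R_ℝ ∈ (0,1)` the vector field
`X_a = (2/(1−R_ℝ²)) (⟨x,a⟩ x − ½(|x|²+R_ℝ²) a)` is conformal Killing for the
hyperbolic metric with conformal factor `V_a = 2⟨x,a⟩/(1−|x|²)`:
`½(∇̄_i (X_a)_j + ∇̄_j (X_a)_i) = V_a ḡ_{ij}`. -/
theorem pb_Xa_conformal_Killing {m : ℕ} (a y : EuclideanSpace ℝ (Fin m)) (hy : ‖y‖ < 1)
    (R : ℝ) (hR0 : 0 < R) (hR1 : R < 1) (i j : Fin m) :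
    (1 / 2 : ℝ) *
        (pbMetric y (pbConn (fun z => (2 / (1 - R ^ 2)) •
              ((inner ℝ z a : ℝ) • z - ((‖z‖ ^ 2 + R ^ 2) / 2) • a)) y
            (EuclideanSpace.single i 1)) (EuclideanSpace.single j 1)
          + pbMetric y (pbConn (fun z => (2 / (1 - R ^ 2)) •
              ((inner ℝ z a : ℝ) • z - ((‖z‖ ^ 2 + R ^ 2) / 2) • a)) y
            (EuclideanSpace.single j 1)) (EuclideanSpace.single i 1))
      = pbVa a y * pbMetric y (EuclideanSpace.single i 1) (EuclideanSpace.single j 1) :=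
  pbXa_conformalKilling (by nlinarith) a hy _ _
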